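/- Let n_1,…,n_s ≥ 2 be weights and let m_1 denote the multiplicity of 1 as a root of χ_{[n_1,…,n_s]} in ℂ. Then the reciprocal polynomial satisfies χ_{[n_1,…,n_s]}^* = (−1)^{m_1} · χ_{[n_1,…,n_s]}; in particular χ_{[n_1,…,n_s]} is self-reciprocal if and only if m_1 is even. -/

import Mathlib

open Matrix Polynomial

/-- The Coxeter matrix `Φ_[n]` of the linearly oriented quiver of type `A_{n-1}`:
the `(n-1) × (n-1)` integer matrix whose `(i,j)`-entry is `1` if `j = i + 1`
(for rows other than the last), whose last row has all entries `-1`, and whose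
other entries are `0`. -/
def PhiA (n : ℕ) : Matrix (Fin (n - 1)) (Fin (n - 1)) ℤ :=
  fun i j =>
    if (i : ℕ) = n - 2 then -1
    else if (j : ℕ) = (i : ℕ) + 1 then 1 else 0

/-- The Kronecker (tensor) product `Φ_{[n_1,…,n_s]} = Φ_{[n_1]} ⊗ ⋯ ⊗ Φ_{[n_s]}`,
realized on the index type `Π i, Fin (n i - 1)`. -/
def PhiProd {s : ℕ} (n : Fin s → ℕ) :
    Matrix ((i : Fin s) → Fin (n i - 1)) ((i : Fin s) → Fin (n i - 1)) ℤ :=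
  fun x y => ∏ i, PhiA (n i) (x i) (y i)

/-- The characteristic polynomial `χ_{[n_1,…,n_s]} ∈ ℤ[X]` of `Φ_{[n_1,…,n_s]}`. -/
noncomputable def Chi {s : ℕ} (n : Fin s → ℕ) : Polynomial ℤ :=
  (PhiProd n).charpoly

/-- The standard primitive complex `m`-th root of unity `exp(2π√-1/m)`. -/
noncomputable def zeta (m : ℕ) : ℂ := Complex.exp (2 * Real.pi * Complex.I / m)

/-!
On the sum-zero vectors of `ℤⁿ`, written in their first `n - 1` coordinates, `Φ_[n]` is the
cyclic shift of coordinates; hence `Φ_[n] ^ n = 1`, and taking Kronecker products,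
`Φ_{[n_1,…,n_s]} ^ (n_1 ⋯ n_s) = 1`. So every complex root `a` of `χ` has `|a| = 1`, i.e.
`a⁻¹ = ā`, and since `χ` has real coefficients its roots are closed under conjugation; this
gives `χ^* = c • χ` with `c = ∏ (-a)`. The constant is found by splitting off `(X - 1)^{m_1}`
and evaluating at `1`, where a polynomial and its reverse agree.
-/

namespace Polynomial

theorem reverse_X_sub_C {R : Type*} [Ring R] [Nontrivial R] (a : R) :
    (X - C a).reverse = 1 - C a * X := by
  rw [sub_eq_add_neg, ← C_neg, reverse_add_C, ← one_mul X, reverse_mul_X, ← C_1, reverse_C]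
  simp [sub_eq_add_neg]

theorem reverse_multiset_prod {R : Type*} [CommSemiring R] [NoZeroDivisors R]
    (s : Multiset R[X]) : s.prod.reverse = (s.map reverse).prod := by
  induction s using Multiset.induction with
  | empty => rw [Multiset.prod_zero, ← C_1, reverse_C, C_1, Multiset.map_zero, Multiset.prod_zero]
  | cons p s ih => rw [Multiset.prod_cons, reverse_mul_of_domain, ih, Multiset.map_cons,
      Multiset.prod_cons]

theorem reverse_pow {R : Type*} [CommSemiring R] [NoZeroDivisors R] (p : R[X]) (k : ℕ) :
    (p ^ k).reverse = p.reverse ^ k := by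
  rw [← Multiset.prod_replicate, reverse_multiset_prod, Multiset.map_replicate,
    Multiset.prod_replicate]

theorem eval_one_reverse {R : Type*} [CommSemiring R] (p : R[X]) :
    p.reverse.eval 1 = p.eval 1 := by
  simpa using @eval₂_reverse_mul_pow _ _ _ _ (RingHom.id R) 1 invertibleOne p

theorem reverse_map_of_injective {R S : Type*} [Semiring R] [Semiring S] {f : R →+* S}
    (hf : Function.Injective f) (p : R[X]) : (p.map f).reverse = p.reverse.map f := by
  rw [reverse, reverse, reflect_map, natDegree_map_eq_of_injective hf]

theorem eq_neg_one_pow_rootMultiplicity_of_reverse_eq {R : Type*} [CommRing R] [IsDomain R]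
    {p : R[X]} (hp : p ≠ 0) {c : R} (h : p.reverse = C c * p) :
    c = (-1) ^ p.rootMultiplicity 1 := by
  set m := p.rootMultiplicity 1
  set G := p /ₘ (X - C 1) ^ m
  have hpG : (X - C 1) ^ m * G = p := pow_mul_divByMonic_rootMultiplicity_eq p 1
  have hG : G.eval 1 ≠ 0 := eval_divByMonic_pow_rootMultiplicity_ne_zero 1 hp
  have hX : (X - C (1 : R)).reverse = -(X - C 1) := by rw [reverse_X_sub_C]; simp
  have hcG : C c * G = (-1) ^ m * G.reverse := by
    refine mul_left_cancel₀ (pow_ne_zero m (X_sub_C_ne_zero (1 : R))) ?_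
    calc (X - C 1) ^ m * (C c * G) = C c * p := by rw [← hpG]; ring
      _ = p.reverse := h.symm
      _ = (X - C 1) ^ m * ((-1) ^ m * G.reverse) := by
        rw [← hpG, reverse_mul_of_domain, reverse_pow, hX, neg_pow]; ring
  have h1 := congrArg (eval 1) hcG
  simp only [eval_mul, eval_C, eval_pow, eval_neg, eval_one, eval_one_reverse] at h1
  exact mul_right_cancel₀ hG h1

theorem reverse_eq_C_mul_of_norm_roots {p : ℂ[X]} (hp : p.Monic)
    (hconj : p.map (starRingEnd ℂ) = p) (hroots : ∀ a ∈ p.roots, ‖a‖ = 1) :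
    p.reverse = C (p.roots.map (- ·)).prod * p := by
  have hsplit : p = (p.roots.map (X - C ·)).prod :=
    (IsAlgClosed.splits p).eq_prod_roots_of_monic hp
  have hfactor : ∀ a ∈ p.roots, 1 - C a * X = C (-a) * (X - C (starRingEnd ℂ a)) := by
    intro a ha
    have hconj_a : a * starRingEnd ℂ a = 1 := by
      rw [Complex.mul_conj, Complex.normSq_eq_norm_sq, hroots a ha]; norm_num
    rw [mul_sub, ← C_mul, neg_mul, hconj_a, map_neg, map_neg, C_1]; ring
  calc p.reverse = (p.roots.map fun a => 1 - C a * X).prod := by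
        conv_lhs => rw [hsplit]
        rw [reverse_multiset_prod, Multiset.map_map]
        exact congrArg _ (Multiset.map_congr rfl fun a _ => reverse_X_sub_C a)
    _ = (p.roots.map fun a => C (-a) * (X - C (starRingEnd ℂ a))).prod :=
        congrArg _ (Multiset.map_congr rfl hfactor)
    _ = C (p.roots.map (- ·)).prod * (p.roots.map (X - C ·)).prod.map (starRingEnd ℂ) := by
        rw [Multiset.prod_map_mul, map_multiset_prod, Polynomial.map_multiset_prod,
          Multiset.map_map, Multiset.map_map]
        simp
    _ = C (p.roots.map (- ·)).prod * p := by rw [← hsplit, hconj]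

theorem reverse_eq_neg_one_pow_mul_of_norm_roots {p : ℤ[X]} (hp : p.Monic)
    (hroots : ∀ a ∈ (p.map (Int.castRingHom ℂ)).roots, ‖a‖ = 1) :
    p.reverse = (-1) ^ (p.map (Int.castRingHom ℂ)).rootMultiplicity 1 * p := by
  have hconj : (p.map (Int.castRingHom ℂ)).map (starRingEnd ℂ) =
      p.map (Int.castRingHom ℂ) := by
    rw [map_map, RingHom.ext_int ((starRingEnd ℂ).comp _) (Int.castRingHom ℂ)]
  have hF := reverse_eq_C_mul_of_norm_roots (hp.map _) hconj hroots
  rw [eq_neg_one_pow_rootMultiplicity_of_reverse_eq (hp.map _).ne_zero hF] at hF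
  apply map_injective _ (RingHom.injective_int (Int.castRingHom ℂ))
  rw [← reverse_map_of_injective (RingHom.injective_int _), hF]
  simp

end Polynomial

namespace Matrix

variable {m : Type*} [Fintype m] [DecidableEq m]

theorem pow_eq_one_of_isRoot_charpoly {K : Type*} [Field K] {A : Matrix m m K} {N : ℕ}
    (hA : A ^ N = 1) {μ : K} (hμ : A.charpoly.IsRoot μ) : μ ^ N = 1 := by
  rw [← charpoly_toLin', ← Module.End.hasEigenvalue_iff_isRoot_charpoly] at hμ
  obtain ⟨v, hv⟩ := (hμ.pow N).exists_hasEigenvector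
  have hvμ := hv.apply_eq_smul
  rw [← toLin'_pow, hA, toLin'_one, LinearMap.id_apply] at hvμ
  exact smul_left_injective K hv.2 ((one_smul K v).trans hvμ) |>.symm

theorem reverse_charpoly_of_pow_eq_one {A : Matrix m m ℤ} {N : ℕ} (hN : N ≠ 0)
    (hA : A ^ N = 1) :
    A.charpoly.reverse =
      (-1) ^ (A.charpoly.map (Int.castRingHom ℂ)).rootMultiplicity 1 * A.charpoly := by
  refine reverse_eq_neg_one_pow_mul_of_norm_roots A.charpoly_monic fun a ha => ?_
  rw [← charpoly_map] at ha
  have hA' : A.map (Int.castRingHom ℂ) ^ N = 1 := by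
    rw [← Matrix.map_pow, hA]
    simp
  exact Complex.norm_eq_one_of_pow_eq_one
    (pow_eq_one_of_isRoot_charpoly hA' (isRoot_of_mem_roots ha)) hN

section PiKronecker

variable {ι : Type*} [Fintype ι] {R : Type*} [CommSemiring R]

def piKronecker {α β : ι → Type*} (M : ∀ i, Matrix (α i) (β i) R) :
    Matrix (∀ i, α i) (∀ i, β i) R :=
  of fun x y => ∏ i, M i (x i) (y i)

theorem piKronecker_mul [DecidableEq ι] {α β γ : ι → Type*} [∀ i, Fintype (β i)]
    (M : ∀ i, Matrix (α i) (β i) R) (N : ∀ i, Matrix (β i) (γ i) R) :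
    piKronecker M * piKronecker N = piKronecker fun i => M i * N i := by
  ext x z
  simp only [piKronecker, mul_apply, of_apply, Fintype.prod_sum, Finset.prod_mul_distrib]

theorem piKronecker_one {α : ι → Type*} [∀ i, DecidableEq (α i)]
    [DecidableEq (∀ i, α i)] :
    piKronecker (fun i => (1 : Matrix (α i) (α i) R)) = 1 := by
  ext x y
  simp only [piKronecker, of_apply, one_apply, Fintype.prod_ite_zero, Finset.prod_const_one,
    funext_iff]

theorem piKronecker_pow [DecidableEq ι] {α : ι → Type*} [∀ i, Fintype (α i)]
    [∀ i, DecidableEq (α i)] (M : ∀ i, Matrix (α i) (α i) R) (k : ℕ) :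
    piKronecker M ^ k = piKronecker fun i => M i ^ k := by
  induction k with
  | zero => simp only [pow_zero, piKronecker_one]
  | succ k ih => simp only [pow_succ, ih, piKronecker_mul]

end PiKronecker

end Matrix

theorem phiA_mulVec_init {m : ℕ} (w : Fin (m + 1) → ℤ) (hw : ∑ i, w i = 0) :
    PhiA (m + 1) *ᵥ Fin.init w = Fin.tail w := by
  ext (i : Fin m)
  simp only [mulVec, dotProduct, PhiA, Fin.init, Fin.tail]
  by_cases hi : (i : ℕ) = m + 1 - 2
  · have hlast : i.succ = Fin.last m := by ext; rw [Fin.val_succ, Fin.val_last]; omega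
    rw [Fin.sum_univ_castSucc] at hw
    simp only [hi, if_true, neg_one_mul, Finset.sum_neg_distrib, hlast]
    -- the sum is indexed by `Fin (m + 1 - 1)`, which is `Fin m` only up to defeq
    change -∑ j : Fin m, w j.castSucc = _
    linarith
  · have hlt : (i : ℕ) + 1 < m := by omega
    simp only [hi, if_false, ite_mul, one_mul, zero_mul]
    rw [Finset.sum_eq_single_of_mem ⟨i + 1, hlt⟩ (Finset.mem_univ _)]
    · simp only [↓reduceIte, Fin.castSucc_mk]
      rfl
    · intro j _ hj
      rw [if_neg fun h => hj (Fin.ext h)]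

open Fin.NatCast in
theorem phiA_pow_mulVec_init {m : ℕ} (w : Fin (m + 1) → ℤ) (hw : ∑ i, w i = 0) (k : ℕ) :
    PhiA (m + 1) ^ k *ᵥ Fin.init w = Fin.init fun i : Fin (m + 1) => w (i + k) := by
  induction k with
  | zero => simp
  | succ k ih =>
    have hwk : ∑ i : Fin (m + 1), w (i + k) = 0 :=
      (Equiv.sum_comp (Equiv.addRight (k : Fin (m + 1))) w).trans hw
    rw [pow_succ', ← mulVec_mulVec, ih, phiA_mulVec_init _ hwk]
    ext i
    simp only [Fin.tail, Fin.init, ← Fin.coeSucc_eq_succ]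
    rw [Nat.cast_succ, add_comm (k : Fin (m + 1)), add_assoc]

theorem phiA_pow_self (n : ℕ) : PhiA n ^ n = 1 := by
  cases n with
  | zero => exact pow_zero _
  | succ m =>
    refine mulVec_injective (funext fun (v : Fin m → ℤ) => ?_)
    set w : Fin (m + 1) → ℤ := Fin.snoc v (-∑ i, v i)
    have hv : Fin.init w = v := Fin.init_snoc ..
    have hw : ∑ i, w i = 0 := by simp [w, Fin.sum_snoc]
    rw [one_mulVec, ← hv, phiA_pow_mulVec_init w hw]
    simp

theorem phiProd_eq_piKronecker {s : ℕ} (n : Fin s → ℕ) :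
    PhiProd n = piKronecker fun i => PhiA (n i) := rfl

theorem phiProd_pow_prod {s : ℕ} (n : Fin s → ℕ) : PhiProd n ^ ∏ i, n i = 1 := by
  have h : ∀ i, PhiA (n i) ^ ∏ j, n j = 1 := fun i => by
    obtain ⟨c, hc⟩ := Finset.dvd_prod_of_mem n (Finset.mem_univ i)
    rw [hc, pow_mul, phiA_pow_self, one_pow]
  simp only [phiProd_eq_piKronecker, piKronecker_pow, h, piKronecker_one]

theorem chi_reverse_eq_general {s : ℕ} (n : Fin s → ℕ) (hn : ∀ i, 2 ≤ n i) :
    (Chi n).reverse =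
      (-1) ^ (Polynomial.rootMultiplicity (1 : ℂ)
        ((Chi n).map (Int.castRingHom ℂ))) * Chi n ∧
    ((Chi n).reverse = Chi n ↔
      Even (Polynomial.rootMultiplicity (1 : ℂ)
        ((Chi n).map (Int.castRingHom ℂ)))) := by
  have hN : ∏ i, n i ≠ 0 := Finset.prod_ne_zero_iff.mpr fun i _ => by have := hn i; omega
  have hrev : (Chi n).reverse =
      (-1) ^ ((Chi n).map (Int.castRingHom ℂ)).rootMultiplicity 1 * Chi n :=
    (PhiProd n).reverse_charpoly_of_pow_eq_one hN (phiProd_pow_prod n)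
  have hChi : Chi n ≠ 0 := (PhiProd n).charpoly_monic.ne_zero
  refine ⟨hrev, ?_⟩
  rw [hrev, mul_eq_right₀ hChi]
  exact neg_one_pow_eq_one_iff_even (by norm_num)

theorem chi_reverse_eq {s : ℕ} (hs : 0 < s) (n : Fin s → ℕ) (hn : ∀ i, 2 ≤ n i) :
    (Chi n).reverse =
      (-1) ^ (Polynomial.rootMultiplicity (1 : ℂ)
        ((Chi n).map (Int.castRingHom ℂ))) * Chi n ∧
    ((Chi n).reverse = Chi n ↔
      Even (Polynomial.rootMultiplicity (1 : ℂ)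
        ((Chi n).map (Int.castRingHom ℂ)))) :=
  chi_reverse_eq_general n hn
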